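/- arXiv:1203.6150 — 4 statements merged into one kernel-verified Lean document; each statement's English description precedes it below -/
import Mathlib

section
/- Let φ be a branching mechanism with linear coefficient b. Suppose v : [0,∞) × [0,∞) → [0,∞), written (t,λ) ↦ v_t(λ), is such that for every λ ≥ 0 the function t ↦ v_t(λ) is differentiable with (d/dt) v_t(λ) = −φ(v_t(λ)) for all t ≥ 0 and v_0(λ) = λ. Then for every t ≥ 0, the right derivative of λ ↦ v_t(λ) at λ = 0 exists and equals e^{−bt}; that is, lim_{λ↓0} v_t(λ)/λ = e^{−bt}. -/
/-!
Write `φ(x) = b x + ψ(x)`, where `ψ(x) = σ²x²/2 + ∫ (e^{-zx} - 1 + zx) m(dz)` is nonnegative,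
satisfies `ψ(x) ≤ (x / M) ψ(M)` on `[0, M]` by convexity of `exp`, and `ψ(x) / x → 0` as
`x ↓ 0` by dominated convergence. Since `ψ ≥ 0`, `s ↦ v_s(λ) e^{bs}` is nonincreasing, so
`v_t(λ) ≤ λ e^{-bt}` and `v_s(λ) ≤ Eλ` on `[0, t]` with `E = e^{|b|t}`. There
`ψ(v_s(λ)) ≤ ε(λ) v_s(λ)` with `ε(λ) = ψ(Eλ) / (Eλ)`, so `s ↦ v_s(λ) e^{(b + ε(λ))s}` is
nondecreasing and `v_t(λ) ≥ λ e^{-(b + ε(λ))t}`. Both bounds divided by `λ` tend to `e^{-bt}`.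
-/

open MeasureTheory

/-- A branching mechanism `φ(λ) = bλ + σ²λ²/2 + ∫₀^∞ (e^{-zλ} - 1 + zλ) m(dz)`. -/
noncomputable def phiBM (b σ : ℝ) (m : Measure ℝ) (lam : ℝ) : ℝ :=
  b * lam + σ ^ 2 * lam ^ 2 / 2 + ∫ z, (Real.exp (-(z * lam)) - 1 + z * lam) ∂m

open Set Filter Topology

namespace BranchingMechanism

noncomputable def kernel (x : ℝ) : ℝ := Real.exp (-x) - 1 + x

lemma continuous_kernel : Continuous kernel := by
  unfold kernel; fun_prop

lemma kernel_nonneg (x : ℝ) : 0 ≤ kernel x := by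
  have := Real.add_one_le_exp (-x)
  unfold kernel; linarith

lemma kernel_le_self {x : ℝ} (hx : 0 ≤ x) : kernel x ≤ x := by
  have : Real.exp (-x) ≤ 1 := Real.exp_le_one_iff.mpr (by linarith)
  unfold kernel; linarith

lemma kernel_le_sq {x : ℝ} (hx : 0 ≤ x) : kernel x ≤ x ^ 2 := by
  rcases le_total x 1 with h | h
  · have hx₁ : |-x| ≤ 1 := by rwa [abs_neg, abs_of_nonneg hx]
    have := (abs_le.mp (Real.abs_exp_sub_one_sub_id_le hx₁)).2
    unfold kernel; linarith
  · nlinarith [kernel_le_self hx]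

lemma kernel_le_min {x : ℝ} (hx : 0 ≤ x) : kernel x ≤ min x (x ^ 2) :=
  le_min (kernel_le_self hx) (kernel_le_sq hx)

lemma kernel_mul_le {c : ℝ} (hc₀ : 0 ≤ c) (hc₁ : c ≤ 1) (x : ℝ) :
    kernel (c * x) ≤ c * kernel x := by
  have hconv := convexOn_exp.2 (mem_univ (-x)) (mem_univ 0) hc₀ (sub_nonneg.2 hc₁) (by ring)
  simp only [smul_eq_mul, mul_zero, add_zero, Real.exp_zero, mul_one, mul_neg] at hconv
  unfold kernel; linarith

lemma kernel_mul_le_mul_min {z M : ℝ} (hz : 0 ≤ z) (hM : 0 ≤ M) :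
    kernel (z * M) ≤ (M + M ^ 2) * min z (z ^ 2) := by
  rcases le_total z 1 with h | h
  · rw [min_eq_right (by nlinarith)]
    nlinarith [kernel_le_sq (mul_nonneg hz hM), mul_nonneg hM (sq_nonneg z)]
  · rw [min_eq_left (by nlinarith)]
    nlinarith [kernel_le_self (mul_nonneg hz hM), mul_nonneg hz (sq_nonneg M)]

noncomputable def nonlinearPart (σ : ℝ) (m : Measure ℝ) (x : ℝ) : ℝ :=
  σ ^ 2 * x ^ 2 / 2 + ∫ z, kernel (z * x) ∂m

lemma phiBM_eq_mul_add_nonlinearPart (b σ : ℝ) (m : Measure ℝ) (x : ℝ) :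
    phiBM b σ m x = b * x + nonlinearPart σ m x := by
  simp only [phiBM, nonlinearPart, kernel]
  ring

lemma nonlinearPart_nonneg (σ : ℝ) (m : Measure ℝ) (x : ℝ) : 0 ≤ nonlinearPart σ m x :=
  add_nonneg (by positivity) (integral_nonneg fun _ => kernel_nonneg _)

section LevyMeasure

variable {σ : ℝ} {m : Measure ℝ} (hpos : ∀ᵐ z ∂m, 0 ≤ z)
  (hint : Integrable (fun z => min z (z ^ 2)) m)
include hpos hint

lemma integrable_kernel_mul {M : ℝ} (hM : 0 ≤ M) : Integrable (fun z => kernel (z * M)) m := by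
  refine (hint.const_mul (M + M ^ 2)).mono'
    (continuous_kernel.comp (continuous_id.mul continuous_const)).aestronglyMeasurable ?_
  filter_upwards [hpos] with z hz
  rw [Real.norm_of_nonneg (kernel_nonneg _)]
  exact kernel_mul_le_mul_min hz hM

lemma nonlinearPart_le_div_mul {x M : ℝ} (hx : 0 ≤ x) (hxM : x ≤ M) (hM : 0 < M) :
    nonlinearPart σ m x ≤ x / M * nonlinearPart σ m M := by
  have hc₀ : 0 ≤ x / M := by positivity
  have hc₁ : x / M ≤ 1 := (div_le_one hM).2 hxM
  have hquad : σ ^ 2 * x ^ 2 / 2 ≤ x / M * (σ ^ 2 * M ^ 2 / 2) := by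
    rw [show x / M * (σ ^ 2 * M ^ 2 / 2) = σ ^ 2 * (x * M) / 2 by field_simp]
    gcongr
    nlinarith
  have hlevy : ∫ z, kernel (z * x) ∂m ≤ x / M * ∫ z, kernel (z * M) ∂m := by
    rw [← integral_const_mul]
    refine integral_mono (integrable_kernel_mul hpos hint hx)
      ((integrable_kernel_mul hpos hint hM.le).const_mul _) fun z => ?_
    calc kernel (z * x) = kernel (x / M * (z * M)) := by congr 1; field_simp
      _ ≤ x / M * kernel (z * M) := kernel_mul_le hc₀ hc₁ _
  unfold nonlinearPart
  rw [mul_add]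
  exact add_le_add hquad hlevy

lemma tendsto_integral_kernel_div :
    Tendsto (fun x => ∫ z, kernel (z * x) / x ∂m) (𝓝[>] 0) (𝓝 0) := by
  have key := tendsto_integral_filter_of_dominated_convergence (μ := m) (l := 𝓝[>] (0 : ℝ))
    (F := fun x z => kernel (z * x) / x) (f := fun _ => 0) (fun z => min z (z ^ 2)) ?_ ?_ hint ?_
  · simpa using key
  · exact Eventually.of_forall fun x => ((continuous_kernel.comp
      (continuous_id.mul continuous_const)).div_const x).aestronglyMeasurable
  · filter_upwards [Ioc_mem_nhdsGT (zero_lt_one' ℝ)] with x ⟨hx₀, hx₁⟩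
    filter_upwards [hpos] with z hz
    rw [Real.norm_of_nonneg (div_nonneg (kernel_nonneg _) hx₀.le), div_le_iff₀' hx₀, mul_comm z]
    exact (kernel_mul_le hx₀.le hx₁ z).trans
      (mul_le_mul_of_nonneg_left (kernel_le_min hz) hx₀.le)
  · filter_upwards [hpos] with z hz
    refine squeeze_zero' (g := fun x => z ^ 2 * x) ?_ ?_ ?_
    · filter_upwards [self_mem_nhdsWithin] with x (hx : 0 < x)
      exact div_nonneg (kernel_nonneg _) hx.le
    · filter_upwards [self_mem_nhdsWithin] with x (hx : 0 < x)
      rw [div_le_iff₀ hx]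
      nlinarith [kernel_le_sq (mul_nonneg hz hx.le)]
    · exact tendsto_nhdsWithin_of_tendsto_nhds
        ((continuous_const.mul continuous_id).tendsto' 0 0 (mul_zero _))

lemma tendsto_nonlinearPart_div :
    Tendsto (fun x => nonlinearPart σ m x / x) (𝓝[>] 0) (𝓝 0) := by
  have hquad : Tendsto (fun x : ℝ => σ ^ 2 * x / 2) (𝓝[>] 0) (𝓝 0) :=
    tendsto_nhdsWithin_of_tendsto_nhds
      ((by fun_prop : Continuous fun x : ℝ => σ ^ 2 * x / 2).tendsto' 0 0 (by simp))
  have hsum := hquad.add (tendsto_integral_kernel_div hpos hint)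
  rw [add_zero] at hsum
  refine hsum.congr' ?_
  filter_upwards [self_mem_nhdsWithin] with x (hx : 0 < x)
  rw [nonlinearPart, integral_div, add_div]
  congr 1
  field_simp

end LevyMeasure

lemma mul_exp_neg_le_of_hasDerivWithinAt {f f' : ℝ → ℝ} {c a b : ℝ} (hab : a ≤ b)
    (hf : ∀ s ∈ Icc a b, HasDerivWithinAt f (f' s) (Icc a b) s)
    (hf' : ∀ s ∈ Ioo a b, 0 ≤ f' s + c * f s) :
    f a * Real.exp (-(c * (b - a))) ≤ f b := by
  have hderiv : ∀ s ∈ Ioo a b, HasDerivWithinAt (fun s => f s * Real.exp (c * s))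
      ((f' s + c * f s) * Real.exp (c * s)) (Ioo a b) s := fun s hs => by
    have hexp : HasDerivWithinAt (fun s => Real.exp (c * s)) (Real.exp (c * s) * c) (Ioo a b) s :=
      ((hasDerivAt_id s).const_mul c).exp.hasDerivWithinAt.congr_deriv (by simp)
    exact (((hf s (Ioo_subset_Icc_self hs)).mono Ioo_subset_Icc_self).mul hexp).congr_deriv
      (by ring)
  have hmono : MonotoneOn (fun s => f s * Real.exp (c * s)) (Icc a b) :=
    monotoneOn_of_hasDerivWithinAt_nonneg (convex_Icc a b)
      (fun s hs => (hf s hs).continuousWithinAt.mul (by fun_prop))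
      (by simpa only [interior_Icc] using hderiv)
      (by simpa only [interior_Icc] using fun s hs => mul_nonneg (hf' s hs) (Real.exp_pos _).le)
  have h := hmono (left_mem_Icc.2 hab) (right_mem_Icc.2 hab) hab
  calc f a * Real.exp (-(c * (b - a)))
      = f a * Real.exp (c * a) * Real.exp (-(c * b)) := by
        rw [mul_assoc, ← Real.exp_add]; ring_nf
    _ ≤ f b * Real.exp (c * b) * Real.exp (-(c * b)) := by gcongr
    _ = f b := by rw [mul_assoc, ← Real.exp_add]; simp

section Solution

variable {b σ : ℝ} {m : Measure ℝ} {u : ℝ → ℝ} {t : ℝ}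

lemma le_mul_exp_of_hasDerivWithinAt (ht : 0 ≤ t)
    (hu : ∀ s ∈ Ici 0, HasDerivWithinAt u (-phiBM b σ m (u s)) (Ici 0) s) :
    u t ≤ u 0 * Real.exp (-(b * t)) := by
  have h := mul_exp_neg_le_of_hasDerivWithinAt (f := fun s => -u s) (c := b) ht
    (fun s hs => ((hu s hs.1).mono Icc_subset_Ici_self).neg) fun s _ => by
      rw [neg_neg, phiBM_eq_mul_add_nonlinearPart]
      linarith [nonlinearPart_nonneg σ m (u s)]
  rw [sub_zero, neg_mul] at h
  linarith

lemma le_exp_abs_mul_of_hasDerivWithinAt {s : ℝ} (hs : s ∈ Icc 0 t) (hu₀ : 0 ≤ u 0)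
    (hu : ∀ s ∈ Ici 0, HasDerivWithinAt u (-phiBM b σ m (u s)) (Ici 0) s) :
    u s ≤ Real.exp (|b| * t) * u 0 := by
  have hexp : -(b * s) ≤ |b| * t := by
    nlinarith [neg_abs_le b, hs.1, hs.2, abs_nonneg b]
  calc u s ≤ u 0 * Real.exp (-(b * s)) := le_mul_exp_of_hasDerivWithinAt hs.1 hu
    _ ≤ Real.exp (|b| * t) * u 0 := by
      rw [mul_comm]; exact mul_le_mul_of_nonneg_right (Real.exp_le_exp.2 hexp) hu₀

lemma mul_exp_le_of_hasDerivWithinAt (hpos : ∀ᵐ z ∂m, 0 ≤ z)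
    (hint : Integrable (fun z => min z (z ^ 2)) m) {M : ℝ} (hM : 0 < M) (ht : 0 ≤ t)
    (hu : ∀ s ∈ Ici 0, HasDerivWithinAt u (-phiBM b σ m (u s)) (Ici 0) s)
    (hbound : ∀ s ∈ Icc 0 t, u s ∈ Icc 0 M) :
    u 0 * Real.exp (-((b + nonlinearPart σ m M / M) * t)) ≤ u t := by
  have h := mul_exp_neg_le_of_hasDerivWithinAt (c := b + nonlinearPart σ m M / M) ht
    (fun s hs => (hu s hs.1).mono Icc_subset_Ici_self) fun s hs => by
      obtain ⟨hu₀, huM⟩ := hbound s (Ioo_subset_Icc_self hs)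
      rw [phiBM_eq_mul_add_nonlinearPart]
      linarith [nonlinearPart_le_div_mul (σ := σ) hpos hint hu₀ huM hM,
        show u s / M * nonlinearPart σ m M = nonlinearPart σ m M / M * u s by ring]
  rwa [sub_zero] at h

end Solution

lemma tendsto_const_mul_nhdsGT_zero {c : ℝ} (hc : 0 < c) : Tendsto (c * ·) (𝓝[>] 0) (𝓝[>] 0) := by
  simpa only [comap_mulLeft_nhdsGT_zero hc] using tendsto_comap (f := (c * ·)) (x := 𝓝[>] 0)

end BranchingMechanism

open BranchingMechanism in
theorem stmt4_general (b σ : ℝ) (m : Measure ℝ)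
    (hm0 : m (Set.Iic 0) = 0)
    (hm : (∫⁻ z, ENNReal.ofReal (min z (z ^ 2)) ∂m) < ⊤)
    (v : ℝ → ℝ → ℝ)
    -- `v` takes values in `[0,∞)` on `[0,∞) × [0,∞)`
    (hvnonneg : ∀ t lam : ℝ, 0 ≤ t → 0 ≤ lam → 0 ≤ v t lam)
    -- `v_0(λ) = λ`
    (hv0 : ∀ lam : ℝ, 0 ≤ lam → v 0 lam = lam)
    -- `(d/dt) v_t(λ) = -φ(v_t(λ))` for all `t ≥ 0`
    (hode : ∀ lam : ℝ, 0 ≤ lam → ∀ t : ℝ, 0 ≤ t →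
      HasDerivWithinAt (fun s => v s lam) (-phiBM b σ m (v t lam)) (Set.Ici 0) t) :
    ∀ t : ℝ, 0 ≤ t →
      Filter.Tendsto (fun lam => v t lam / lam) (nhdsWithin 0 (Set.Ioi 0))
        (nhds (Real.exp (-(b * t)))) := by
  intro t ht
  have hpos : ∀ᵐ z ∂m, 0 ≤ z :=
    ae_iff.2 (measure_mono_null (fun z (hz : ¬0 ≤ z) => (not_le.1 hz).le) hm0)
  have hint : Integrable (fun z => min z (z ^ 2)) m :=
    ⟨(by fun_prop : Continuous fun z : ℝ => min z (z ^ 2)).aestronglyMeasurable,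
      (hasFiniteIntegral_iff_ofReal (by filter_upwards [hpos] with z hz; positivity)).2 hm⟩
  set E := Real.exp (|b| * t)
  have hE : 0 < E := Real.exp_pos _
  have hlower (lam : ℝ) (hlam : 0 < lam) :
      lam * Real.exp (-((b + nonlinearPart σ m (E * lam) / (E * lam)) * t)) ≤ v t lam := by
    have hbound (s : ℝ) (hs : s ∈ Icc 0 t) : v s lam ∈ Icc 0 (E * lam) := by
      have h := le_exp_abs_mul_of_hasDerivWithinAt hs ((hv0 lam hlam.le).symm ▸ hlam.le)
        (hode lam hlam.le)
      rw [hv0 lam hlam.le] at h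
      exact ⟨hvnonneg s lam hs.1 hlam.le, h⟩
    simpa only [hv0 lam hlam.le] using
      mul_exp_le_of_hasDerivWithinAt hpos hint (mul_pos hE hlam) ht (hode lam hlam.le) hbound
  have hlim : Tendsto
      (fun lam => Real.exp (-((b + nonlinearPart σ m (E * lam) / (E * lam)) * t)))
      (𝓝[>] 0) (𝓝 (Real.exp (-(b * t)))) := by
    have heps := (tendsto_nonlinearPart_div (σ := σ) hpos hint).comp (tendsto_const_mul_nhdsGT_zero hE)
    exact (Real.continuous_exp.tendsto _).comp
      (by simpa using ((heps.const_add b).mul_const t).neg)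
  refine tendsto_of_tendsto_of_tendsto_of_le_of_le' hlim tendsto_const_nhds ?_ ?_
  · filter_upwards [self_mem_nhdsWithin] with lam (hlam : 0 < lam)
    rw [le_div_iff₀ hlam, mul_comm]
    exact hlower lam hlam
  · filter_upwards [self_mem_nhdsWithin] with lam (hlam : 0 < lam)
    rw [div_le_iff₀ hlam, mul_comm]
    simpa [hv0 lam hlam.le] using le_mul_exp_of_hasDerivWithinAt ht (hode lam hlam.le)

theorem stmt4 (b σ : ℝ) (hσ : 0 ≤ σ) (m : Measure ℝ)
    (hm0 : m (Set.Iic 0) = 0)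
    (hm : (∫⁻ z, ENNReal.ofReal (min z (z ^ 2)) ∂m) < ⊤)
    (v : ℝ → ℝ → ℝ)
    -- `v` takes values in `[0,∞)` on `[0,∞) × [0,∞)`
    (hvnonneg : ∀ t lam : ℝ, 0 ≤ t → 0 ≤ lam → 0 ≤ v t lam)
    -- `v_0(λ) = λ`
    (hv0 : ∀ lam : ℝ, 0 ≤ lam → v 0 lam = lam)
    -- `(d/dt) v_t(λ) = -φ(v_t(λ))` for all `t ≥ 0`
    (hode : ∀ lam : ℝ, 0 ≤ lam → ∀ t : ℝ, 0 ≤ t →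
      HasDerivWithinAt (fun s => v s lam) (-phiBM b σ m (v t lam)) (Set.Ici 0) t) :
    ∀ t : ℝ, 0 ≤ t →
      Filter.Tendsto (fun lam => v t lam / lam) (nhdsWithin 0 (Set.Ioi 0))
        (nhds (Real.exp (-(b * t)))) :=
  stmt4_general b σ m hm0 hm v hvnonneg hv0 hode
end

section
/- Let p < q be reals, σ ≥ 0, b_p, b_q ∈ ℝ, and let m_p, m_q be Borel measures on (0,∞) with ∫₀^∞ (z ∧ z²) m_p(dz) < ∞ and ∫₀^∞ (z ∧ z²) m_q(dz) < ∞. Define φ_r(λ) = b_r λ + (1/2)σ²λ² + ∫₀^∞ (e^{−zλ} − 1 + zλ) m_r(dz) for r ∈ {p,q}. Let θ ↦ β_θ be a nonnegative Borel function on [p,q] and θ ↦ n_θ(dz) a Borel kernel from [p,q] to (0,∞) with sup_{p ≤ θ ≤ q} [β_θ + ∫₀^∞ z n_θ(dz)] < ∞, and set ζ_θ(λ) = β_θ λ + ∫₀^∞ (1 − e^{−zλ}) n_θ(dz). If φ_p(λ) − φ_q(λ) = ∫_p^q ζ_θ(λ) dθ for every λ ≥ 0, then b_q = b_p − ∫_p^q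 β_θ dθ − ∫_p^q (∫₀^∞ z n_θ(dz)) dθ, and m_q(B) = m_p(B) + ∫_p^q n_θ(B) dθ for every Borel set B ⊂ (0,∞). -/
/-!
Mixing the kernel over `θ ∈ (p, q]` gives a measure `ν = n ∘ₘ dθ` with
`∫_p^q ∫ g dn_θ dθ = ∫ g dν`, so the hypothesis says that the jump exponents of `mp + ν` and `mq`
differ by a linear function of `λ`. A second difference in `λ` removes that linear term and shows
that the finite measures `(1 - e^{-z})² (mp + ν)(dz)` and `(1 - e^{-z})² mq(dz)` have the same
Laplace transform at the integers. After the substitution `x = e^{-z}` these are the moments of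
two measures on `[0, 1]`, which determine them by Weierstrass approximation. Hence
`mp + ν = mq`, and the linear term `bq - bp + ∫ β + ∫ z ν(dz)` vanishes.
-/

open MeasureTheory Set Real ProbabilityTheory

lemma Real.exp_neg_sub_one_add_nonneg (u : ℝ) : 0 ≤ exp (-u) - 1 + u := by
  linarith [add_one_le_exp (-u)]

lemma Real.exp_neg_sub_one_add_le_min {u : ℝ} (hu : 0 ≤ u) :
    exp (-u) - 1 + u ≤ min u (u ^ 2) := by
  have h₁ : exp (-u) ≤ 1 := exp_le_one_iff.2 (neg_nonpos.2 hu)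
  refine le_min (by linarith) ?_
  rcases le_total u 1 with hu1 | hu1
  · have := (abs_le.mp (abs_exp_sub_one_sub_id_le (x := -u) (by rwa [abs_neg, abs_of_nonneg hu]))).2
    nlinarith
  · nlinarith

lemma Real.one_sub_exp_neg_mem_Icc {u : ℝ} (hu : 0 ≤ u) : 1 - exp (-u) ∈ Icc 0 u :=
  ⟨by linarith [exp_le_one_iff.2 (neg_nonpos.2 hu)], by linarith [add_one_le_exp (-u)]⟩

lemma Real.one_sub_exp_neg_sq_le_min {u : ℝ} (hu : 0 ≤ u) :
    (1 - exp (-u)) ^ 2 ≤ min u (u ^ 2) := by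
  obtain ⟨h₀, h₁⟩ := one_sub_exp_neg_mem_Icc hu
  have : 1 - exp (-u) ≤ 1 := by linarith [exp_pos (-u)]
  exact le_min (by nlinarith) (pow_le_pow_left₀ h₀ h₁ 2)

lemma Real.exp_neg_mul_mul_one_sub_exp_neg_sq (lam z : ℝ) :
    exp (-(z * lam)) * (1 - exp (-z)) ^ 2 =
      (exp (-(z * lam)) - 1 + z * lam) - 2 * (exp (-(z * (lam + 1))) - 1 + z * (lam + 1))
        + (exp (-(z * (lam + 2))) - 1 + z * (lam + 2)) := by
  have h₁ : exp (-(z * (lam + 1))) = exp (-(z * lam)) * exp (-z) := by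
    rw [← exp_add]; ring_nf
  have h₂ : exp (-(z * (lam + 2))) = exp (-(z * lam)) * exp (-z) ^ 2 := by
    rw [sq, ← exp_add, ← exp_add]; ring_nf
  rw [h₁, h₂]; ring

lemma min_mul_le_max_mul_min {z c : ℝ} (hz : 0 ≤ z) :
    min (z * c) ((z * c) ^ 2) ≤ max c (c ^ 2) * min z (z ^ 2) := by
  rcases le_total z 1 with hz1 | hz1
  · rw [min_eq_right (show z ^ 2 ≤ z by nlinarith)]
    exact (min_le_right _ _).trans (by nlinarith [le_max_right c (c ^ 2), sq_nonneg z])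
  · rw [min_eq_left (show z ≤ z ^ 2 by nlinarith)]
    exact (min_le_left _ _).trans (by nlinarith [le_max_left c (c ^ 2)])

lemma ContinuousOn.integrable_of_ae_mem_Icc {ρ : Measure ℝ} [IsFiniteMeasure ρ] {a b : ℝ}
    {f : ℝ → ℝ} (hf : ContinuousOn f (Icc a b)) (hρ : ∀ᵐ x ∂ρ, x ∈ Icc a b) : Integrable f ρ :=
  hf.integrableOn_Icc.integrable_of_ae_notMem_eq_zero (hρ.mono fun _ hx hx' => absurd hx hx')

namespace MeasureTheory

variable {ρ ρ₁ ρ₂ : Measure ℝ} {a b : ℝ}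

lemma integral_polynomial_eval_eq_sum [IsFiniteMeasure ρ] (hρ : ∀ᵐ x ∂ρ, x ∈ Icc a b)
    (P : Polynomial ℝ) :
    ∫ x, P.eval x ∂ρ = ∑ i ∈ Finset.range (P.natDegree + 1), P.coeff i * ∫ x, x ^ i ∂ρ := by
  simp_rw [Polynomial.eval_eq_sum_range, ← integral_const_mul]
  exact integral_finsetSum _ fun i _ =>
    (ContinuousOn.integrable_of_ae_mem_Icc (by fun_prop) hρ).const_mul _

lemma abs_integral_sub_integral_le [IsFiniteMeasure ρ] {s : Set ℝ} {f g : ℝ → ℝ} {δ : ℝ}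
    (hs : ∀ᵐ x ∂ρ, x ∈ s) (hf : Integrable f ρ) (hg : Integrable g ρ)
    (hfg : ∀ x ∈ s, |f x - g x| ≤ δ) :
    |∫ x, f x ∂ρ - ∫ x, g x ∂ρ| ≤ δ * ρ.real univ := by
  rw [← integral_sub hf hg]
  exact norm_integral_le_of_norm_le_const
    (hs.mono fun x hx => (Real.norm_eq_abs _).trans_le (hfg x hx))

theorem Measure.ext_of_integral_pow_eq [IsFiniteMeasure ρ₁] [IsFiniteMeasure ρ₂]
    (h₁ : ∀ᵐ x ∂ρ₁, x ∈ Icc a b) (h₂ : ∀ᵐ x ∂ρ₂, x ∈ Icc a b)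
    (h : ∀ k : ℕ, ∫ x, x ^ k ∂ρ₁ = ∫ x, x ^ k ∂ρ₂) : ρ₁ = ρ₂ := by
  refine ext_of_forall_integral_eq_of_IsFiniteMeasure fun f => ?_
  have hf : ContinuousOn f (Icc a b) := f.continuous.continuousOn
  set M := ρ₁.real univ + ρ₂.real univ
  refine eq_of_forall_dist_le fun ε hε => ?_
  obtain ⟨P, hP⟩ := exists_polynomial_near_of_continuousOn a b f hf (ε / (M + 1)) (by positivity)
  have hPf : ∀ x ∈ Icc a b, |f x - P.eval x| ≤ ε / (M + 1) := fun x hx =>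
    (abs_sub_comm (P.eval x) (f x) ▸ hP x hx).le
  have hPρ : ∫ x, P.eval x ∂ρ₁ = ∫ x, P.eval x ∂ρ₂ := by
    simp only [integral_polynomial_eval_eq_sum h₁, integral_polynomial_eval_eq_sum h₂, h]
  have e₁ := abs_integral_sub_integral_le h₁ (hf.integrable_of_ae_mem_Icc h₁)
    (P.continuousOn.integrable_of_ae_mem_Icc h₁) hPf
  have e₂ := abs_integral_sub_integral_le h₂ (hf.integrable_of_ae_mem_Icc h₂)
    (P.continuousOn.integrable_of_ae_mem_Icc h₂) hPf
  have hM : ε / (M + 1) * M ≤ ε := by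
    rw [div_mul_eq_mul_div, div_le_iff₀ (by positivity)]
    nlinarith
  rw [Real.dist_eq]
  calc |∫ x, f x ∂ρ₁ - ∫ x, f x ∂ρ₂|
      = |(∫ x, f x ∂ρ₁ - ∫ x, P.eval x ∂ρ₁) - (∫ x, f x ∂ρ₂ - ∫ x, P.eval x ∂ρ₂)| := by
        rw [hPρ, sub_sub_sub_cancel_right]
    _ ≤ ε / (M + 1) * ρ₁.real univ + ε / (M + 1) * ρ₂.real univ :=
        (abs_sub _ _).trans (add_le_add e₁ e₂)
    _ ≤ ε := by linarith

variable {μ ν : Measure ℝ}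

lemma measurableEmbedding_exp_neg : MeasurableEmbedding fun z : ℝ => Real.exp (-z) :=
  (Real.continuous_exp.comp continuous_neg).measurableEmbedding
    (Real.exp_injective.comp neg_injective)

theorem Measure.ext_of_integral_exp_neg_nat_mul_eq [IsFiniteMeasure μ] [IsFiniteMeasure ν]
    (hμ : ∀ᵐ z ∂μ, 0 ≤ z) (hν : ∀ᵐ z ∂ν, 0 ≤ z)
    (h : ∀ k : ℕ, ∫ z, Real.exp (-(z * k)) ∂μ = ∫ z, Real.exp (-(z * k)) ∂ν) : μ = ν := by
  have hT := measurableEmbedding_exp_neg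
  have hmem : ∀ {ρ : Measure ℝ}, (∀ᵐ z ∂ρ, 0 ≤ z) →
      ∀ᵐ x ∂ρ.map (fun z => Real.exp (-z)), x ∈ Icc (0 : ℝ) 1 := fun hρ =>
    hT.ae_map_iff.2 <| hρ.mono fun z hz =>
      ⟨(Real.exp_pos _).le, Real.exp_le_one_iff.2 (neg_nonpos.2 hz)⟩
  have hmoment : ∀ (ρ : Measure ℝ) (k : ℕ),
      ∫ x, x ^ k ∂ρ.map (fun z => Real.exp (-z)) = ∫ z, Real.exp (-(z * k)) ∂ρ := fun ρ k => by
    rw [hT.integral_map]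
    simp_rw [← Real.exp_nat_mul, mul_neg, mul_comm]
  rw [← hT.comap_map μ, ← hT.comap_map ν,
    Measure.ext_of_integral_pow_eq (hmem hμ) (hmem hν) fun k => by rw [hmoment, hmoment, h]]

end MeasureTheory

structure IsBranchingLevyMeasure (m : Measure ℝ) : Prop where
  measure_Iic_zero : m (Iic 0) = 0
  lintegral_min_sq_lt_top : ∫⁻ z, ENNReal.ofReal (min z (z ^ 2)) ∂m < ⊤

noncomputable def jumpExponent (m : Measure ℝ) (lam : ℝ) : ℝ :=
  ∫ z, (exp (-(z * lam)) - 1 + z * lam) ∂m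

namespace IsBranchingLevyMeasure

variable {m μ ν : Measure ℝ}

lemma ae_pos (hm : IsBranchingLevyMeasure m) : ∀ᵐ z ∂m, 0 < z :=
  ae_iff.2 <| measure_mono_null (fun z hz => (not_lt.1 hz : z ≤ 0)) hm.measure_Iic_zero

lemma integrable_min_sq (hm : IsBranchingLevyMeasure m) :
    Integrable (fun z => min z (z ^ 2)) m :=
  ⟨by fun_prop, (hasFiniteIntegral_iff_ofReal (hm.ae_pos.mono fun z hz =>
    le_min hz.le (sq_nonneg z))).2 hm.lintegral_min_sq_lt_top⟩

lemma integrable_of_norm_le (hm : IsBranchingLevyMeasure m) {f : ℝ → ℝ}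
    (hf : AEStronglyMeasurable f m) {c : ℝ}
    (hfc : ∀ z, 0 < z → ‖f z‖ ≤ min (z * c) ((z * c) ^ 2)) : Integrable f m :=
  (hm.integrable_min_sq.const_mul (max c (c ^ 2))).mono' hf <|
    hm.ae_pos.mono fun z hz => (hfc z hz).trans (min_mul_le_max_mul_min hz.le)

lemma integrable_jumpIntegrand (hm : IsBranchingLevyMeasure m) {lam : ℝ} (hlam : 0 ≤ lam) :
    Integrable (fun z => exp (-(z * lam)) - 1 + z * lam) m :=
  hm.integrable_of_norm_le (by fun_prop) fun z hz => by
    rw [Real.norm_of_nonneg (exp_neg_sub_one_add_nonneg _)]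
    exact exp_neg_sub_one_add_le_min (mul_nonneg hz.le hlam)

lemma add (hμ : IsBranchingLevyMeasure μ) (hν : IsBranchingLevyMeasure ν) :
    IsBranchingLevyMeasure (μ + ν) where
  measure_Iic_zero := by simp [hμ.measure_Iic_zero, hν.measure_Iic_zero]
  lintegral_min_sq_lt_top := by
    rw [lintegral_add_measure]
    exact ENNReal.add_lt_top.2 ⟨hμ.lintegral_min_sq_lt_top, hν.lintegral_min_sq_lt_top⟩

lemma jumpExponent_add (hμ : IsBranchingLevyMeasure μ) (hν : IsBranchingLevyMeasure ν)
    {lam : ℝ} (hlam : 0 ≤ lam) :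
    jumpExponent (μ + ν) lam = jumpExponent μ lam + jumpExponent ν lam :=
  integral_add_measure (hμ.integrable_jumpIntegrand hlam) (hν.integrable_jumpIntegrand hlam)

lemma integral_exp_neg_mul_sq_weight (hm : IsBranchingLevyMeasure m) {lam : ℝ}
    (hlam : 0 ≤ lam) :
    ∫ z, exp (-(z * lam)) * (1 - exp (-z)) ^ 2 ∂m =
      jumpExponent m lam - 2 * jumpExponent m (lam + 1) + jumpExponent m (lam + 2) := by
  have hF : ∀ {t : ℝ}, 0 ≤ t → Integrable (fun z => exp (-(z * t)) - 1 + z * t) m :=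
    hm.integrable_jumpIntegrand
  simp_rw [exp_neg_mul_mul_one_sub_exp_neg_sq lam]
  have h₂ := (hF (t := lam + 1) (by linarith)).const_mul 2
  rw [integral_add (f := fun z => _ - _) ((hF hlam).sub h₂) (hF (by linarith)),
    integral_sub (hF hlam) h₂, integral_const_mul]
  rfl

lemma isFiniteMeasure_withDensity_weight (hm : IsBranchingLevyMeasure m) :
    IsFiniteMeasure (m.withDensity fun z => ENNReal.ofReal ((1 - exp (-z)) ^ 2)) :=
  isFiniteMeasure_withDensity_ofReal <| (hm.integrable_of_norm_le (c := 1) (by fun_prop)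
    fun z hz => by
      rw [Real.norm_of_nonneg (sq_nonneg _), mul_one]
      exact one_sub_exp_neg_sq_le_min hz.le).hasFiniteIntegral

lemma integral_withDensity_weight (g : ℝ → ℝ) :
    ∫ z, g z ∂(m.withDensity fun z => ENNReal.ofReal ((1 - exp (-z)) ^ 2)) =
      ∫ z, (1 - exp (-z)) ^ 2 * g z ∂m := by
  have := integral_withDensity_eq_integral_smul (μ := m)
    (f := fun z => ((1 - exp (-z)) ^ 2).toNNReal) (by fun_prop) g
  simp only [NNReal.smul_def, Real.coe_toNNReal _ (sq_nonneg _), smul_eq_mul] at this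
  exact this

lemma ae_weight_ne_zero (hm : IsBranchingLevyMeasure m) :
    ∀ᵐ z ∂m, ENNReal.ofReal ((1 - exp (-z)) ^ 2) ≠ 0 :=
  hm.ae_pos.mono fun z hz => by
    have : exp (-z) < 1 := exp_lt_one_iff.2 (neg_lt_zero.2 hz)
    simp only [ne_eq, ENNReal.ofReal_eq_zero, not_le]
    nlinarith

theorem eq_of_jumpExponent_eq_add_mul (hμ : IsBranchingLevyMeasure μ)
    (hν : IsBranchingLevyMeasure ν) (c : ℝ)
    (h : ∀ lam, 0 ≤ lam → jumpExponent μ lam = jumpExponent ν lam + c * lam) : μ = ν := by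
  set w : ℝ → ENNReal := fun z => ENNReal.ofReal ((1 - exp (-z)) ^ 2)
  have := hμ.isFiniteMeasure_withDensity_weight
  have := hν.isFiniteMeasure_withDensity_weight
  have hnonneg : ∀ {m : Measure ℝ}, IsBranchingLevyMeasure m → ∀ᵐ z ∂m.withDensity w, 0 ≤ z :=
    fun hm => (withDensity_absolutelyContinuous _ _).ae_le (hm.ae_pos.mono fun _ hz => hz.le)
  have hw : μ.withDensity w = ν.withDensity w := by
    refine Measure.ext_of_integral_exp_neg_nat_mul_eq (hnonneg hμ) (hnonneg hν) fun k => ?_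
    have hk : (0 : ℝ) ≤ k := k.cast_nonneg
    simp only [w, integral_withDensity_weight, mul_comm ((1 - exp _) ^ 2)]
    rw [hμ.integral_exp_neg_mul_sq_weight hk, hν.integral_exp_neg_mul_sq_weight hk,
      h _ hk, h _ (by linarith), h _ (by linarith)]
    ring
  rw [← withDensity_inv_same (by fun_prop) hμ.ae_weight_ne_zero
      (ae_of_all _ fun _ => ENNReal.ofReal_ne_top),
    hw, withDensity_inv_same (by fun_prop) hν.ae_weight_ne_zero
      (ae_of_all _ fun _ => ENNReal.ofReal_ne_top)]

lemma integrable_one_sub_exp_neg_mul (hm : IsBranchingLevyMeasure m)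
    (hid : Integrable (fun z => z) m) {lam : ℝ} (hlam : 0 ≤ lam) :
    Integrable (fun z => 1 - exp (-(z * lam))) m :=
  (hid.mul_const lam).mono' (by fun_prop) <| hm.ae_pos.mono fun z hz => by
    obtain ⟨h₀, h₁⟩ := one_sub_exp_neg_mem_Icc (mul_nonneg hz.le hlam)
    rwa [Real.norm_of_nonneg h₀]

lemma integral_one_sub_exp_neg_mul (hm : IsBranchingLevyMeasure m)
    (hid : Integrable (fun z => z) m) {lam : ℝ} (hlam : 0 ≤ lam) :
    ∫ z, (1 - exp (-(z * lam))) ∂m = (∫ z, z ∂m) * lam - jumpExponent m lam := by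
  rw [← integral_mul_const, jumpExponent,
    ← integral_sub (hid.mul_const lam) (hm.integrable_jumpIntegrand hlam)]
  congr 1 with z
  ring

lemma of_integrable_id (h0 : m (Iic 0) = 0) (hm : Integrable (fun z => z) m) :
    IsBranchingLevyMeasure m where
  measure_Iic_zero := h0
  lintegral_min_sq_lt_top := (lintegral_mono fun z =>
    ENNReal.ofReal_le_ofReal (min_le_left z (z ^ 2))).trans_lt hm.lintegral_lt_top

end IsBranchingLevyMeasure

namespace MeasureTheory.Measure

variable {α β : Type*} [MeasurableSpace α] [MeasurableSpace β] {μ : Measure α} {κ : Kernel α β}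

lemma integral_bind {g : β → ℝ} (hg : Integrable g (κ ∘ₘ μ)) :
    ∫ z, g z ∂(κ ∘ₘ μ) = ∫ θ, ∫ z, g z ∂κ θ ∂μ := by
  rw [comp_eq_comp_const_apply] at hg ⊢
  rw [Kernel.integral_comp hg]
  simp

lemma integrable_integral_bind {g : β → ℝ} (hg : Integrable g (κ ∘ₘ μ)) :
    Integrable (fun θ => ∫ z, g z ∂κ θ) μ := by
  rw [comp_eq_comp_const_apply] at hg
  simpa using hg.integral_comp

lemma bind_apply_eq_zero {s : Set β} (hs : MeasurableSet s) (h : ∀ᵐ θ ∂μ, κ θ s = 0) :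
    (κ ∘ₘ μ) s = 0 := by
  rw [bind_apply hs κ.aemeasurable, lintegral_congr_ae h, lintegral_zero]

lemma integrable_id_bind [IsFiniteMeasure μ] {κ : Kernel α ℝ} (h0 : ∀ᵐ θ ∂μ, κ θ (Iic 0) = 0)
    {C : ENNReal} (hC : C < ⊤) (hκC : ∀ᵐ θ ∂μ, ∫⁻ z, ENNReal.ofReal z ∂κ θ ≤ C) :
    Integrable (fun z => z) (κ ∘ₘ μ) := by
  have hpos : ∀ᵐ z ∂(κ ∘ₘ μ), 0 ≤ z := ae_iff.2 <| measure_mono_null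
    (fun z hz => (not_le.1 hz).le) (bind_apply_eq_zero measurableSet_Iic h0)
  refine ⟨aestronglyMeasurable_id, (hasFiniteIntegral_iff_ofReal hpos).2 ?_⟩
  rw [lintegral_bind κ.aemeasurable (by fun_prop)]
  calc ∫⁻ θ, ∫⁻ z, ENNReal.ofReal z ∂κ θ ∂μ ≤ ∫⁻ _, C ∂μ := lintegral_mono_ae hκC
    _ < ⊤ := by simpa using ENNReal.mul_lt_top hC (measure_lt_top μ univ)

end MeasureTheory.Measure

theorem stmt8_general (p q : ℝ) (σ : ℝ)
    (bp bq : ℝ) (mp mq : Measure ℝ)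
    (hmp0 : mp (Set.Iic 0) = 0) (hmq0 : mq (Set.Iic 0) = 0)
    (hmp : (∫⁻ z, ENNReal.ofReal (min z (z ^ 2)) ∂mp) < ⊤)
    (hmq : (∫⁻ z, ENNReal.ofReal (min z (z ^ 2)) ∂mq) < ⊤)
    -- the density `β` and the kernel `n`
    (β : ℝ → ℝ) (hβmeas : Measurable β) (hβnonneg : ∀ θ, 0 ≤ β θ)
    (n : ProbabilityTheory.Kernel ℝ ℝ)
    (hn0 : ∀ θ ∈ Set.Icc p q, (n θ) (Set.Iic 0) = 0)
    -- `sup_{p ≤ θ ≤ q} [β_θ + ∫₀^∞ z n_θ(dz)] < ∞`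
    (hsup : ∃ C : ENNReal, C < ⊤ ∧ ∀ θ ∈ Set.Icc p q,
      ENNReal.ofReal (β θ) + (∫⁻ z, ENNReal.ofReal z ∂(n θ)) ≤ C)
    -- `φ_p(λ) - φ_q(λ) = ∫_p^q ζ_θ(λ) dθ` for every `λ ≥ 0`
    (hζ : ∀ lam : ℝ, 0 ≤ lam →
      (bp * lam + σ ^ 2 * lam ^ 2 / 2 + ∫ z, (Real.exp (-(z * lam)) - 1 + z * lam) ∂mp)
        - (bq * lam + σ ^ 2 * lam ^ 2 / 2 + ∫ z, (Real.exp (-(z * lam)) - 1 + z * lam) ∂mq)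
      = ∫ θ in Set.Ioc p q, (β θ * lam + ∫ z, (1 - Real.exp (-(z * lam))) ∂(n θ))) :
    -- conclusion: identification of the parameters
    bq = bp - (∫ θ in Set.Ioc p q, β θ)
          - (∫ θ in Set.Ioc p q, ∫ z, z ∂(n θ)) ∧
    ∀ B : Set ℝ, MeasurableSet B → B ⊆ Set.Ioi 0 →
      mq B = mp B + ∫⁻ θ in Set.Ioc p q, (n θ) B := by
  obtain ⟨C, hC, hbound⟩ := hsup
  set μθ := volume.restrict (Ioc p q)
  have hIcc : ∀ᵐ θ ∂μθ, θ ∈ Icc p q :=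
    (ae_restrict_mem measurableSet_Ioc).mono fun θ hθ => Ioc_subset_Icc_self hθ
  set ν := n ∘ₘ μθ
  have hid : Integrable (fun z => z) ν := Measure.integrable_id_bind
    (hIcc.mono fun θ hθ => hn0 θ hθ) hC
    (hIcc.mono fun θ hθ => le_add_self.trans (hbound θ hθ))
  have hν0 : ν (Iic 0) = 0 := Measure.bind_apply_eq_zero measurableSet_Iic
    (hIcc.mono fun θ hθ => hn0 θ hθ)
  have hν : IsBranchingLevyMeasure ν := .of_integrable_id hν0 hid
  have hβ : Integrable β μθ := by
    refine (integrable_const C.toReal).mono' hβmeas.aestronglyMeasurable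
      (hIcc.mono fun θ hθ => ?_)
    rw [Real.norm_of_nonneg (hβnonneg θ)]
    exact (ENNReal.ofReal_le_iff_le_toReal hC.ne).1 (le_self_add.trans (hbound θ hθ))
  have hζν : ∀ lam : ℝ, 0 ≤ lam →
      ∫ θ in Ioc p q, (β θ * lam + ∫ z, (1 - exp (-(z * lam))) ∂(n θ)) =
        (∫ θ in Ioc p q, β θ) * lam + (∫ z, z ∂ν) * lam - jumpExponent ν lam := by
    intro lam hlam
    have hg := hν.integrable_one_sub_exp_neg_mul hid hlam
    rw [integral_add (hβ.mul_const lam) (Measure.integrable_integral_bind hg), integral_mul_const,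
      ← Measure.integral_bind hg, hν.integral_one_sub_exp_neg_mul hid hlam]
    ring
  have hφ : ∀ lam, 0 ≤ lam → jumpExponent (mp + ν) lam =
      jumpExponent mq lam + (bq - bp + (∫ θ in Ioc p q, β θ) + ∫ z, z ∂ν) * lam := by
    intro lam hlam
    have := hζ lam hlam
    rw [hζν lam hlam] at this
    rw [IsBranchingLevyMeasure.jumpExponent_add ⟨hmp0, hmp⟩ hν hlam]
    unfold jumpExponent at *
    linarith
  have key : mp + ν = mq :=
    (IsBranchingLevyMeasure.add ⟨hmp0, hmp⟩ hν).eq_of_jumpExponent_eq_add_mul ⟨hmq0, hmq⟩ _ hφ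
  refine ⟨?_, fun B hB _ => ?_⟩
  · have := hφ 1 zero_le_one
    rw [key] at this
    rw [← Measure.integral_bind hid]
    linarith
  · rw [← key, Measure.add_apply, Measure.bind_apply hB n.aemeasurable]

theorem stmt8 (p q : ℝ) (hpq : p < q) (σ : ℝ) (hσ : 0 ≤ σ)
    (bp bq : ℝ) (mp mq : Measure ℝ)
    (hmp0 : mp (Set.Iic 0) = 0) (hmq0 : mq (Set.Iic 0) = 0)
    (hmp : (∫⁻ z, ENNReal.ofReal (min z (z ^ 2)) ∂mp) < ⊤)
    (hmq : (∫⁻ z, ENNReal.ofReal (min z (z ^ 2)) ∂mq) < ⊤)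
    -- the density `β` and the kernel `n`
    (β : ℝ → ℝ) (hβmeas : Measurable β) (hβnonneg : ∀ θ, 0 ≤ β θ)
    (n : ProbabilityTheory.Kernel ℝ ℝ)
    (hn0 : ∀ θ ∈ Set.Icc p q, (n θ) (Set.Iic 0) = 0)
    -- `sup_{p ≤ θ ≤ q} [β_θ + ∫₀^∞ z n_θ(dz)] < ∞`
    (hsup : ∃ C : ENNReal, C < ⊤ ∧ ∀ θ ∈ Set.Icc p q,
      ENNReal.ofReal (β θ) + (∫⁻ z, ENNReal.ofReal z ∂(n θ)) ≤ C)
    -- `φ_p(λ) - φ_q(λ) = ∫_p^q ζ_θ(λ) dθ` for every `λ ≥ 0`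
    (hζ : ∀ lam : ℝ, 0 ≤ lam →
      (bp * lam + σ ^ 2 * lam ^ 2 / 2 + ∫ z, (Real.exp (-(z * lam)) - 1 + z * lam) ∂mp)
        - (bq * lam + σ ^ 2 * lam ^ 2 / 2 + ∫ z, (Real.exp (-(z * lam)) - 1 + z * lam) ∂mq)
      = ∫ θ in Set.Ioc p q, (β θ * lam + ∫ z, (1 - Real.exp (-(z * lam))) ∂(n θ))) :
    -- conclusion: identification of the parameters
    bq = bp - (∫ θ in Set.Ioc p q, β θ)
          - (∫ θ in Set.Ioc p q, ∫ z, z ∂(n θ)) ∧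
    ∀ B : Set ℝ, MeasurableSet B → B ⊆ Set.Ioi 0 →
      mq B = mp B + ∫⁻ θ in Set.Ioc p q, (n θ) B :=
  stmt8_general p q σ bp bq mp mq hmp0 hmq0 hmp hmq β hβmeas hβnonneg n hn0 hsup hζ
end

section
/- With the setup below, for every p ≤ q ∈ T and every bounded Borel f : [0,∞) → [0,∞) with compact support, the function s ↦ u_{p,q}(s,f) = f(s) + φ_p(u_q(s,f)) − φ_q(u_q(s,f)) is a bounded nonnegative Borel function with compact support, and u_p(s, u_{p,q}(·,f)) = u_q(s,f) for all s ≥ 0. -/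
open MeasureTheory

/-- A bounded nonnegative Borel function on `[0,∞)` with compact support
(vanishing for all sufficiently large arguments). -/
def CSB (g : ℝ → ℝ) : Prop :=
  Measurable g ∧ (∀ s, 0 ≤ g s) ∧ (∃ C : ℝ, ∀ s, g s ≤ C) ∧
    ∃ S : ℝ, ∀ s, S ≤ s → g s = 0

/-- `w` is a solution of `w(s) + ∫_s^∞ φ_q(w(t)) dt = ∫_s^∞ g(t) dt` in the class of
bounded nonnegative Borel functions vanishing for large arguments. -/
def IsSol (φq : ℝ → ℝ) (g w : ℝ → ℝ) : Prop :=
  CSB w ∧ ∀ s : ℝ, 0 ≤ s →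
    w s + (∫ t in Set.Ioi s, φq (w t)) = ∫ t in Set.Ioi s, g t

/-- `u_{p,q}(s,g) = g(s) + φ_p(u_q(s,g)) - φ_q(u_q(s,g))`. -/
noncomputable def upq (φ : ℝ → ℝ → ℝ) (u : ℝ → (ℝ → ℝ) → ℝ → ℝ)
    (p q : ℝ) (g : ℝ → ℝ) (s : ℝ) : ℝ :=
  g s + φ p (u q g s) - φ q (u q g s)

open Set

/-! `u_q(·,f)` itself solves the `φ_p`-equation with data `u_{p,q}(·,f)`: the extra term
`∫ (φ_p - φ_q)(u_q)` added to the right-hand side is exactly the change on the left-hand side.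
The monotonicity of `q ↦ φ_q` makes `u_{p,q}(·,f)` nonnegative, so it is admissible data, and
uniqueness of the solution gives `u_p(·, u_{p,q}(·,f)) = u_q(·,f)`. -/

lemma integrableOn_Ioi_of_abs_le_of_eq_zero {h : ℝ → ℝ} {C S : ℝ} (hm : Measurable h)
    (hb : ∀ t, |h t| ≤ C) (h0 : ∀ t, S ≤ t → h t = 0) (s : ℝ) :
    IntegrableOn h (Ioi s) := by
  have hzero : IntegrableOn h (Ioi S) :=
    integrableOn_zero.congr_fun (fun t ht => (h0 t (le_of_lt ht)).symm) measurableSet_Ioi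
  rcases le_total s S with hsS | hSs
  · have hbounded : IntegrableOn h (Ioc s S) :=
      Measure.integrableOn_of_bounded (M := C) (by simp) hm.aestronglyMeasurable
        (Filter.Eventually.of_forall hb)
    rw [← Ioc_union_Ioi_eq_Ioi hsS]
    exact hbounded.union hzero
  · exact hzero.mono_set (Ioi_subset_Ioi hSs)

namespace CSB

variable {φ w f : ℝ → ℝ}

lemma exists_abs_comp_le (hw : CSB w) (hφ : Continuous φ) : ∃ M, ∀ t, |φ (w t)| ≤ M := by
  obtain ⟨-, hw0, ⟨C, hwC⟩, -⟩ := hw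
  obtain ⟨M, hM⟩ := (isCompact_Icc (a := 0) (b := C)).exists_bound_of_continuousOn
    hφ.continuousOn
  exact ⟨M, fun t => hM (w t) ⟨hw0 t, hwC t⟩⟩

lemma integrableOn_comp_Ioi (hw : CSB w) (hφ : Continuous φ) (hφ0 : φ 0 = 0) (s : ℝ) :
    IntegrableOn (fun t => φ (w t)) (Ioi s) := by
  obtain ⟨M, hM⟩ := hw.exists_abs_comp_le hφ
  obtain ⟨hwm, -, -, S, hwS⟩ := hw
  exact integrableOn_Ioi_of_abs_le_of_eq_zero (hφ.measurable.comp hwm) hM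
    (fun t ht => show φ (w t) = 0 by rw [hwS t ht, hφ0]) s

lemma add_comp_sub_comp (hf : CSB f) (hw : CSB w) {φp φq : ℝ → ℝ}
    (hφp : Continuous φp) (hφq : Continuous φq) (hφp0 : φp 0 = 0) (hφq0 : φq 0 = 0)
    (hle : ∀ x, 0 ≤ x → φq x ≤ φp x) :
    CSB (fun t => f t + φp (w t) - φq (w t)) := by
  obtain ⟨Mp, hMp⟩ := hw.exists_abs_comp_le hφp
  obtain ⟨Mq, hMq⟩ := hw.exists_abs_comp_le hφq
  obtain ⟨hfm, hf0, ⟨Cf, hfC⟩, Sf, hfS⟩ := hf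
  obtain ⟨hwm, hw0, -, Sw, hwS⟩ := hw
  refine ⟨(hfm.add (hφp.measurable.comp hwm)).sub (hφq.measurable.comp hwm),
    fun t => by linarith [hf0 t, hle (w t) (hw0 t)], ⟨Cf + Mp + Mq, fun t => ?_⟩,
    max Sf Sw, fun t ht => ?_⟩
  · linarith [hfC t, (abs_le.mp (hMp t)).2, (abs_le.mp (hMq t)).1]
  · simp only [hfS t (le_of_max_le_left ht), hwS t (le_of_max_le_right ht), hφp0, hφq0]
    ring

end CSB

lemma IsSol.add_comp_sub_comp {φp φq f w : ℝ → ℝ} (hsol : IsSol φq f w) (hf : CSB f)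
    (hφp : Continuous φp) (hφq : Continuous φq) (hφp0 : φp 0 = 0) (hφq0 : φq 0 = 0) :
    IsSol φp (fun t => f t + φp (w t) - φq (w t)) w := by
  refine ⟨hsol.1, fun s hs => ?_⟩
  have hIf : IntegrableOn f (Ioi s) := hf.integrableOn_comp_Ioi continuous_id rfl s
  have hIp := hsol.1.integrableOn_comp_Ioi hφp hφp0 s
  have hIq := hsol.1.integrableOn_comp_Ioi hφq hφq0 s
  change _ = ∫ t in Ioi s, (f t + φp (w t) - φq (w t))
  rw [integral_sub (f := fun t => f t + φp (w t)) (hIf.add hIp) hIq, integral_add hIf hIp]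
  linarith [hsol.2 s hs]

theorem stmt9_general (T : Set ℝ)
    (φ : ℝ → ℝ → ℝ)
    (hφcont : ∀ q ∈ T, Continuous (φ q))
    (hφ0 : ∀ q ∈ T, φ q 0 = 0)
    -- `q ↦ φ_q(λ)` is decreasing for each `λ ≥ 0`
    (hφdec : ∀ lam : ℝ, 0 ≤ lam → ∀ p ∈ T, ∀ q ∈ T, p ≤ q → φ q lam ≤ φ p lam)
    (u : ℝ → (ℝ → ℝ) → ℝ → ℝ)
    -- existence and uniqueness of `u_q(·,g)`
    (hu : ∀ q ∈ T, ∀ g, CSB g → IsSol (φ q) g (u q g))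
    (huniq : ∀ q ∈ T, ∀ g, CSB g → ∀ w, IsSol (φ q) g w → ∀ s, 0 ≤ s → w s = u q g s) :
    ∀ p ∈ T, ∀ q ∈ T, p ≤ q → ∀ f, CSB f →
      CSB (upq φ u p q f) ∧
      ∀ s : ℝ, 0 ≤ s → u p (upq φ u p q f) s = u q f s := by
  intro p hp q hq hpq f hf
  have hsol := hu q hq f hf
  have hg : CSB (upq φ u p q f) :=
    hf.add_comp_sub_comp hsol.1 (hφcont p hp) (hφcont q hq) (hφ0 p hp) (hφ0 q hq)
      fun x hx => hφdec x hx p hp q hq hpq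
  have hsol' : IsSol (φ p) (upq φ u p q f) (u q f) :=
    hsol.add_comp_sub_comp hf (hφcont p hp) (hφcont q hq) (hφ0 p hp) (hφ0 q hq)
  exact ⟨hg, fun s hs => (huniq p hp _ hg _ hsol' s hs).symm⟩

theorem stmt9 (T : Set ℝ) (hT : T.OrdConnected)
    (φ : ℝ → ℝ → ℝ)
    (hφcont : ∀ q ∈ T, Continuous (φ q))
    (hφ0 : ∀ q ∈ T, φ q 0 = 0)
    -- `q ↦ φ_q(λ)` is decreasing for each `λ ≥ 0`
    (hφdec : ∀ lam : ℝ, 0 ≤ lam → ∀ p ∈ T, ∀ q ∈ T, p ≤ q → φ q lam ≤ φ p lam)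
    (u : ℝ → (ℝ → ℝ) → ℝ → ℝ)
    -- existence and uniqueness of `u_q(·,g)`
    (hu : ∀ q ∈ T, ∀ g, CSB g → IsSol (φ q) g (u q g))
    (huniq : ∀ q ∈ T, ∀ g, CSB g → ∀ w, IsSol (φ q) g w → ∀ s, 0 ≤ s → w s = u q g s) :
    ∀ p ∈ T, ∀ q ∈ T, p ≤ q → ∀ f, CSB f →
      CSB (upq φ u p q f) ∧
      ∀ s : ℝ, 0 ≤ s → u p (upq φ u p q f) s = u q f s :=
  stmt9_general T φ hφcont hφ0 hφdec u hu huniq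
end

section
/- With the setup below, assume in addition that for each λ ≥ 0 the function q ↦ φ_q(λ) is continuously differentiable on T with (∂/∂q) φ_q(λ) = −ζ_q(λ), where (θ,λ) ↦ ζ_θ(λ) is continuous on T × [0,∞). Then for every p ≤ q ∈ T, every s ≥ 0, and every bounded Borel f : [0,∞) → [0,∞) with compact support, u_{p,q}(s,f) = f(s) + ∫_p^q ζ_θ(u_θ(s, u_{θ,q}(·,f))) dθ. -/
open MeasureTheory

/-!
Put `w = u_q(·,f)`. For `θ ∈ [p,q]` the data `u_{θ,q}(·,f) = f + φ_θ(w) - φ_q(w)` is again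
admissible (nonnegative because `φ_q ≤ φ_θ`), and integrating it shows that `w` solves the
`θ`-equation with this data. By uniqueness `u_θ(s, u_{θ,q}(·,f)) = w(s)` for every `θ`, so the
integral is `∫_p^q ζ_θ(w(s)) dθ = φ_p(w(s)) - φ_q(w(s))` by the fundamental theorem of calculus.
-/

open Filter Set

def BddVanishingAtTop (g : ℝ → ℝ) : Prop :=
  Measurable g ∧ (∃ C, ∀ s, |g s| ≤ C) ∧ ∀ᶠ s in atTop, g s = 0

namespace BddVanishingAtTop

variable {g h : ℝ → ℝ}

theorem add (hg : BddVanishingAtTop g) (hh : BddVanishingAtTop h) :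
    BddVanishingAtTop (fun s => g s + h s) := by
  obtain ⟨hgm, ⟨C, hC⟩, hg0⟩ := hg
  obtain ⟨hhm, ⟨D, hD⟩, hh0⟩ := hh
  refine ⟨hgm.add hhm, ⟨C + D, fun s => (abs_add_le _ _).trans (add_le_add (hC s) (hD s))⟩, ?_⟩
  filter_upwards [hg0, hh0] with s hgs hhs
  simp [hgs, hhs]

theorem sub (hg : BddVanishingAtTop g) (hh : BddVanishingAtTop h) :
    BddVanishingAtTop (fun s => g s - h s) := by
  obtain ⟨hgm, ⟨C, hC⟩, hg0⟩ := hg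
  obtain ⟨hhm, ⟨D, hD⟩, hh0⟩ := hh
  refine ⟨hgm.sub hhm, ⟨C + D, fun s => (abs_sub _ _).trans (add_le_add (hC s) (hD s))⟩, ?_⟩
  filter_upwards [hg0, hh0] with s hgs hhs
  simp [hgs, hhs]

theorem comp {ψ : ℝ → ℝ} (hg : BddVanishingAtTop g) (hψ : Continuous ψ) (hψ0 : ψ 0 = 0) :
    BddVanishingAtTop (fun s => ψ (g s)) := by
  obtain ⟨hgm, ⟨C, hC⟩, hg0⟩ := hg
  obtain ⟨M, hM⟩ := isCompact_Icc.exists_bound_of_continuousOn (s := Icc (-C) C) hψ.continuousOn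
  refine ⟨hψ.measurable.comp hgm, ⟨M, fun s => hM _ (abs_le.mp (hC s))⟩, ?_⟩
  filter_upwards [hg0] with s hgs
  rw [hgs, hψ0]

theorem integrableOn_Ioi (hg : BddVanishingAtTop g) (a : ℝ) : IntegrableOn g (Ioi a) := by
  obtain ⟨hgm, ⟨C, hC⟩, hg0⟩ := hg
  obtain ⟨S, hS⟩ := eventually_atTop.mp hg0
  have hIcc : IntegrableOn g (Icc a S) :=
    .of_bound measure_Icc_lt_top hgm.aestronglyMeasurable C (.of_forall hC)
  exact hIcc.of_forall_sdiff_eq_zero measurableSet_Ioi fun x hx =>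
    hS x (le_of_lt (not_le.mp fun hxS => hx.2 ⟨hx.1.le, hxS⟩))

end BddVanishingAtTop

namespace CSB

variable {f g w : ℝ → ℝ}

theorem bddVanishingAtTop (hg : CSB g) : BddVanishingAtTop g := by
  obtain ⟨hgm, hg0, ⟨C, hC⟩, ⟨S, hS⟩⟩ := hg
  exact ⟨hgm, ⟨C, fun s => by rw [abs_of_nonneg (hg0 s)]; exact hC s⟩, eventually_atTop.mpr ⟨S, hS⟩⟩

theorem of_bddVanishingAtTop (hg : BddVanishingAtTop g) (hg0 : ∀ s, 0 ≤ g s) : CSB g := by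
  obtain ⟨hgm, ⟨C, hC⟩, hgS⟩ := hg
  exact ⟨hgm, hg0, ⟨C, fun s => (le_abs_self _).trans (hC s)⟩, eventually_atTop.mp hgS⟩

theorem add_comp_sub_comp_s11 {ψ χ : ℝ → ℝ} (hf : CSB f) (hw : CSB w)
    (hψ : Continuous ψ) (hχ : Continuous χ) (hψ0 : ψ 0 = 0) (hχ0 : χ 0 = 0)
    (hψχ : ∀ x, 0 ≤ x → ψ x ≤ χ x) :
    CSB (fun t => f t + χ (w t) - ψ (w t)) :=
  of_bddVanishingAtTop
    ((hf.bddVanishingAtTop.add (hw.bddVanishingAtTop.comp hχ hχ0)).sub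
      (hw.bddVanishingAtTop.comp hψ hψ0))
    fun t => by linarith [hf.2.1 t, hψχ _ (hw.2.1 t)]

end CSB

theorem IsSol.change_nonlinearity {ψ χ f w : ℝ → ℝ} (hw : IsSol ψ f w) (hf : CSB f)
    (hψ : Continuous ψ) (hχ : Continuous χ) (hψ0 : ψ 0 = 0) (hχ0 : χ 0 = 0) :
    IsSol χ (fun t => f t + χ (w t) - ψ (w t)) w := by
  refine ⟨hw.1, fun s hs => ?_⟩
  have hfi := hf.bddVanishingAtTop.integrableOn_Ioi s
  have hψi := (hw.1.bddVanishingAtTop.comp hψ hψ0).integrableOn_Ioi s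
  have hχi := (hw.1.bddVanishingAtTop.comp hχ hχ0).integrableOn_Ioi s
  have hfχi : IntegrableOn (fun t => f t + χ (w t)) (Ioi s) := hfi.add hχi
  rw [integral_sub hfχi hψi, integral_add hfi hχi]
  linarith [hw.2 s hs]

theorem intervalIntegral.integral_eq_sub_of_hasDerivWithinAt_Icc {F F' : ℝ → ℝ} {a b : ℝ}
    (hab : a ≤ b) (hF : ∀ x ∈ Icc a b, HasDerivWithinAt F (F' x) (Icc a b) x)
    (hF' : ContinuousOn F' (Icc a b)) :
    ∫ x in a..b, F' x = F b - F a :=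
  integral_eq_sub_of_hasDeriv_right_of_le hab (fun x hx => (hF x hx).continuousWithinAt)
    (fun x hx => (hF x (Ioo_subset_Icc_self hx)).mono_of_mem_nhdsWithin
      (Icc_mem_nhdsGT_of_mem ⟨hx.1.le, hx.2⟩))
    (hF'.intervalIntegrable_of_Icc hab)

theorem stmt11 (T : Set ℝ) (hT : T.OrdConnected)
    (φ : ℝ → ℝ → ℝ)
    (hφcont : ∀ q ∈ T, Continuous (φ q))
    (hφ0 : ∀ q ∈ T, φ q 0 = 0)
    -- `q ↦ φ_q(λ)` is decreasing for each `λ ≥ 0`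
    (hφdec : ∀ lam : ℝ, 0 ≤ lam → ∀ p ∈ T, ∀ q ∈ T, p ≤ q → φ q lam ≤ φ p lam)
    (u : ℝ → (ℝ → ℝ) → ℝ → ℝ)
    -- existence and uniqueness of `u_q(·,g)`
    (hu : ∀ q ∈ T, ∀ g, CSB g → IsSol (φ q) g (u q g))
    (huniq : ∀ q ∈ T, ∀ g, CSB g → ∀ w, IsSol (φ q) g w → ∀ s, 0 ≤ s → w s = u q g s)
    -- `(θ,λ) ↦ ζ_θ(λ)` is continuous on `T × [0,∞)`
    (ζ : ℝ → ℝ → ℝ)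
    (hζcont : ContinuousOn (fun x : ℝ × ℝ => ζ x.1 x.2) (T ×ˢ Set.Ici 0))
    -- `q ↦ φ_q(λ)` is continuously differentiable on `T` with derivative `-ζ_q(λ)`
    (hφderiv : ∀ lam : ℝ, 0 ≤ lam → ∀ q ∈ T,
      HasDerivWithinAt (fun r => φ r lam) (-ζ q lam) T q) :
    ∀ p ∈ T, ∀ q ∈ T, p ≤ q → ∀ f, CSB f →
      ∀ s : ℝ, 0 ≤ s →
        upq φ u p q f s
          = f s + ∫ θ in p..q, ζ θ (u θ (upq φ u θ q f) s) := by
  intro p hp q hq hpq f hf s hs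
  have hIcc : Icc p q ⊆ T := hT.out hp hq
  have hw := hu q hq f hf
  have hw₀ : 0 ≤ u q f s := hw.1.2.1 s
  have hu_upq : ∀ θ ∈ Icc p q, u θ (upq φ u θ q f) s = u q f s := by
    intro θ hθ
    have hθT := hIcc hθ
    refine (huniq θ hθT _ ?_ _ ?_ s hs).symm
    · exact hf.add_comp_sub_comp_s11 hw.1 (hφcont q hq) (hφcont θ hθT) (hφ0 q hq) (hφ0 θ hθT)
        fun x hx => hφdec x hx θ hθT q hq hθ.2
    · exact hw.change_nonlinearity hf (hφcont q hq) (hφcont θ hθT) (hφ0 q hq) (hφ0 θ hθT)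
  have hζ : ContinuousOn (fun θ => ζ θ (u q f s)) (Icc p q) :=
    hζcont.comp (f := fun θ => (θ, u q f s)) (by fun_prop) fun θ hθ => ⟨hIcc hθ, hw₀⟩
  have hftc := intervalIntegral.integral_eq_sub_of_hasDerivWithinAt_Icc hpq
    (fun θ hθ => (hφderiv _ hw₀ θ (hIcc hθ)).mono hIcc) hζ.neg
  rw [intervalIntegral.integral_neg] at hftc
  rw [intervalIntegral.integral_congr fun θ hθ => congrArg (ζ θ) (hu_upq θ (uIcc_of_le hpq ▸ hθ))]
  simp only [upq]
  linarith
end
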